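/- arXiv:2106.08283 — 4 statements merged into one kernel-verified Lean document; each statement's English description precedes it below -/
import Mathlib

section
/- Let m₁, m₂ ∈ ℝ and σ > 0. Then the total variation distance between the real Gaussian measures with means m₁ and m₂ and common variance σ² equals 2Φ(|m₁ − m₂| / (2σ)) − 1, where Φ is the cumulative distribution function of the standard real Gaussian. -/
open MeasureTheory ProbabilityTheory Real
open scoped Classical RealInnerProductSpace BigOperators

/-- KL divergence: `∫ log(dμ/dν) dμ` if `μ ≪ ν`, else `⊤`. -/
noncomputable def klDiv {Ω : Type*} [MeasurableSpace Ω] (μ ν : Measure Ω) : EReal :=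
  if μ ≪ ν then ((∫ x, Real.log ((μ.rnDeriv ν x).toReal) ∂μ : ℝ) : EReal) else ⊤

/-- Total variation distance between measures. -/
noncomputable def tvDist {Ω : Type*} [MeasurableSpace Ω] (μ ν : Measure Ω) : ℝ :=
  ⨆ A : {s : Set Ω // MeasurableSet s}, |(μ A.1).toReal - (ν A.1).toReal|

/-- Isotropic Gaussian `N(m, σ²I)` on `ℝ^d` (as `EuclideanSpace ℝ (Fin d)`):
the product of coordinatewise real Gaussians with means `m i` and variance `σ²`. -/
noncomputable def gaussianPi {d : ℕ} (m : EuclideanSpace ℝ (Fin d)) (σ : ℝ) :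
    Measure (EuclideanSpace ℝ (Fin d)) :=
  (Measure.pi fun i => gaussianReal (m i) ⟨σ ^ 2, sq_nonneg σ⟩).map
    (MeasurableEquiv.toLp 2 (Fin d → ℝ))

/-- Standard Gaussian cumulative distribution function `Φ`. -/
noncomputable def stdGaussCDF (x : ℝ) : ℝ := cdf (gaussianReal 0 1) x

/-- Clipping map `Clip_ρ(w) = w / max(1, ‖w‖/ρ)`. -/
noncomputable def clip {H : Type*} [NormedAddCommGroup H] [NormedSpace ℝ H] (ρ : ℝ) (w : H) : H :=
  (max 1 (‖w‖ / ρ))⁻¹ • w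

open Set
open scoped ENNReal NNReal

/-!
Scheffé's argument: if `S` is a set on which the density of `μ` dominates that of `ν`, and the
reverse holds off `S`, then every set `A` satisfies `|μ A - ν A| ≤ μ S - ν S`, so the supremum
defining the total variation distance is attained at `S`. For two Gaussians with the same
variance and means `m₂ ≤ m₁`, `S` is the half-line to the right of the midpoint `(m₁ + m₂) / 2`,
and standardizing gives `μ₁ S - μ₂ S = Φ(δ) - Φ(-δ) = 2 Φ(δ) - 1` with `δ = (m₁ - m₂) / (2σ)`.
-/

lemma tvDist_comm {Ω : Type*} [MeasurableSpace Ω] (μ ν : Measure Ω) :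
    tvDist μ ν = tvDist ν μ := by
  simp only [tvDist, abs_sub_comm]

section Scheffe

variable {Ω : Type*} [MeasurableSpace Ω] {μ ν : Measure Ω} {S : Set Ω}

lemma measureReal_sub_le_of_restrict_le [IsFiniteMeasure μ] [IsFiniteMeasure ν]
    (hS : MeasurableSet S) (hpos : ν.restrict S ≤ μ.restrict S)
    (hneg : μ.restrict Sᶜ ≤ ν.restrict Sᶜ) {A : Set Ω} (hA : MeasurableSet A) :
    μ.real A - ν.real A ≤ μ.real S - ν.real S := by
  have hAS : μ.real (A \ S) ≤ ν.real (A \ S) := by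
    have h := hneg (A \ S)
    rw [Measure.restrict_eq_self _ (fun _ hx => hx.2),
      Measure.restrict_eq_self _ (fun _ hx => hx.2)] at h
    exact ENNReal.toReal_mono (measure_ne_top _ _) h
  have hSA : ν.real (S \ A) ≤ μ.real (S \ A) := by
    have h := hpos (S \ A)
    rw [Measure.restrict_eq_self _ sdiff_subset, Measure.restrict_eq_self _ sdiff_subset] at h
    exact ENNReal.toReal_mono (measure_ne_top _ _) h
  have hμA := measureReal_inter_add_sdiff (μ := μ) (s := A) hS
  have hνA := measureReal_inter_add_sdiff (μ := ν) (s := A) hS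
  have hμS := measureReal_inter_add_sdiff (μ := μ) (s := S) hA
  have hνS := measureReal_inter_add_sdiff (μ := ν) (s := S) hA
  rw [inter_comm] at hμS hνS
  linarith

lemma tvDist_eq_of_restrict_le [IsProbabilityMeasure μ] [IsProbabilityMeasure ν]
    (hS : MeasurableSet S) (hpos : ν.restrict S ≤ μ.restrict S)
    (hneg : μ.restrict Sᶜ ≤ ν.restrict Sᶜ) :
    tvDist μ ν = μ.real S - ν.real S := by
  have bound : ∀ A : {s : Set Ω // MeasurableSet s},
      |(μ A.1).toReal - (ν A.1).toReal| ≤ μ.real S - ν.real S := by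
    rintro ⟨A, hA⟩
    change |μ.real A - ν.real A| ≤ _
    have hle := measureReal_sub_le_of_restrict_le hS hpos hneg hA
    -- the complement `Sᶜ` plays the role of `S` for the pair `(ν, μ)`
    have hge := measureReal_sub_le_of_restrict_le (μ := ν) (ν := μ) hS.compl
      hneg (by rwa [compl_compl]) hA
    rw [probReal_compl_eq_one_sub hS, probReal_compl_eq_one_sub hS] at hge
    exact abs_sub_le_iff.2 ⟨hle, by linarith⟩
  exact le_antisymm (ciSup_le bound)
    (le_ciSup_of_le ⟨_, forall_mem_range.2 bound⟩ ⟨S, hS⟩ (le_abs_self _))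

lemma tvDist_eq_of_density_le [IsProbabilityMeasure μ] [IsProbabilityMeasure ν]
    {ρ : Measure Ω} {p q : Ω → ℝ≥0∞} (hμ : μ = ρ.withDensity p) (hν : ν = ρ.withDensity q)
    (hS : MeasurableSet S) (hpos : ∀ x ∈ S, q x ≤ p x) (hneg : ∀ x ∈ Sᶜ, p x ≤ q x) :
    tvDist μ ν = μ.real S - ν.real S := by
  subst hμ hν
  refine tvDist_eq_of_restrict_le hS ?_ ?_
  · rw [restrict_withDensity hS, restrict_withDensity hS]
    exact withDensity_mono (ae_restrict_of_forall_mem hS hpos)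
  · rw [restrict_withDensity hS.compl, restrict_withDensity hS.compl]
    exact withDensity_mono (ae_restrict_of_forall_mem hS.compl hneg)

end Scheffe

section Gaussian

-- The anonymous constructor `⟨σ ^ 2, _⟩` elaborates at type `{r : ℝ // 0 ≤ r}` rather than `ℝ≥0`,
-- and there Mathlib's instance is not found.
instance (m : ℝ) (v : {r : ℝ // 0 ≤ r}) : IsProbabilityMeasure (gaussianReal m v) :=
  instIsProbabilityMeasureGaussianReal m v

lemma mk_sq_ne_zero {σ : ℝ} (hσ : σ ≠ 0) : (⟨σ ^ 2, sq_nonneg σ⟩ : ℝ≥0) ≠ 0 := by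
  intro h
  exact pow_ne_zero 2 hσ (congrArg Subtype.val h)

lemma stdGaussCDF_neg (x : ℝ) : stdGaussCDF (-x) = 1 - stdGaussCDF x := by
  have := nullSingletonClass_gaussianReal (μ := 0) one_ne_zero
  have hsymm : (gaussianReal 0 1).map (fun y => -y) = gaussianReal 0 1 := by
    simpa using gaussianReal_map_neg (μ := 0) (v := 1)
  have hpre : (fun y : ℝ => -y) ⁻¹' Iic (-x) = (Iio x)ᶜ := by
    ext y
    simp
  rw [stdGaussCDF, stdGaussCDF, cdf_eq_real, cdf_eq_real, ← hsymm,
    map_measureReal_apply (by fun_prop) measurableSet_Iic, hpre, hsymm,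
    probReal_compl_eq_one_sub measurableSet_Iio, measureReal_congr Iio_ae_eq_Iic]

variable {σ : ℝ}

lemma gaussianReal_zero_one_map_mul_add (m : ℝ) :
    (gaussianReal 0 1).map (fun x => σ * x + m) = gaussianReal m ⟨σ ^ 2, sq_nonneg σ⟩ := by
  have hcomp : (fun x : ℝ => σ * x + m) = (· + m) ∘ (σ * ·) := rfl
  rw [hcomp, ← Measure.map_map (measurable_add_const m) (measurable_const_mul σ),
    gaussianReal_map_const_mul, gaussianReal_map_add_const, mul_zero, zero_add, mul_one]
  rfl

lemma gaussianReal_real_Iic (hσ : 0 < σ) (m a : ℝ) :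
    (gaussianReal m ⟨σ ^ 2, sq_nonneg σ⟩).real (Iic a) = stdGaussCDF ((a - m) / σ) := by
  have hpre : (fun x : ℝ => σ * x + m) ⁻¹' Iic a = Iic ((a - m) / σ) := by
    ext x
    simp only [mem_preimage, mem_Iic, le_div_iff₀ hσ]
    constructor <;> intro <;> linarith
  rw [← gaussianReal_zero_one_map_mul_add m, map_measureReal_apply (by fun_prop) measurableSet_Iic,
    hpre, stdGaussCDF, cdf_eq_real]

lemma gaussianReal_real_Ici (hσ : 0 < σ) (m a : ℝ) :
    (gaussianReal m ⟨σ ^ 2, sq_nonneg σ⟩).real (Ici a) = stdGaussCDF ((m - a) / σ) := by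
  have := nullSingletonClass_gaussianReal (μ := m) (v := ⟨σ ^ 2, sq_nonneg σ⟩)
    (mk_sq_ne_zero hσ.ne')
  rw [← compl_Iio, probReal_compl_eq_one_sub measurableSet_Iio, measureReal_congr Iio_ae_eq_Iic,
    gaussianReal_real_Iic hσ, ← stdGaussCDF_neg, ← neg_div, neg_sub]

lemma gaussianPDF_le_gaussianPDF {a b x : ℝ} (v : ℝ≥0) (h : (x - a) ^ 2 ≤ (x - b) ^ 2) :
    gaussianPDF b v x ≤ gaussianPDF a v x := by
  simp only [gaussianPDF, gaussianPDFReal]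
  gcongr

lemma tvDist_gaussianReal_of_le (hσ : 0 < σ) {m₁ m₂ : ℝ} (h : m₂ ≤ m₁) :
    tvDist (gaussianReal m₁ ⟨σ ^ 2, sq_nonneg σ⟩) (gaussianReal m₂ ⟨σ ^ 2, sq_nonneg σ⟩)
      = 2 * stdGaussCDF ((m₁ - m₂) / (2 * σ)) - 1 := by
  have hv := mk_sq_ne_zero hσ.ne'
  set c := (m₁ + m₂) / 2
  have hpos : ∀ x ∈ Ici c, gaussianPDF m₂ ⟨σ ^ 2, sq_nonneg σ⟩ x
      ≤ gaussianPDF m₁ ⟨σ ^ 2, sq_nonneg σ⟩ x :=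
    fun x hx => gaussianPDF_le_gaussianPDF _ (by simp only [mem_Ici, c] at hx; nlinarith)
  have hneg : ∀ x ∈ (Ici c)ᶜ, gaussianPDF m₁ ⟨σ ^ 2, sq_nonneg σ⟩ x
      ≤ gaussianPDF m₂ ⟨σ ^ 2, sq_nonneg σ⟩ x :=
    fun x hx => gaussianPDF_le_gaussianPDF _ (by simp only [compl_Ici, mem_Iio, c] at hx; nlinarith)
  have h₁ : (m₁ - c) / σ = (m₁ - m₂) / (2 * σ) := by field_simp; ring
  have h₂ : (m₂ - c) / σ = -((m₁ - m₂) / (2 * σ)) := by field_simp; ring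
  rw [tvDist_eq_of_density_le (gaussianReal_of_var_ne_zero _ hv)
    (gaussianReal_of_var_ne_zero _ hv) measurableSet_Ici hpos hneg, gaussianReal_real_Ici hσ,
    gaussianReal_real_Ici hσ, h₁, h₂, stdGaussCDF_neg]
  ring

end Gaussian

theorem tv_dist_gaussianReal (m₁ m₂ σ : ℝ) (hσ : 0 < σ) :
    tvDist (gaussianReal m₁ ⟨σ ^ 2, sq_nonneg σ⟩) (gaussianReal m₂ ⟨σ ^ 2, sq_nonneg σ⟩)
      = 2 * stdGaussCDF (|m₁ - m₂| / (2 * σ)) - 1 := by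
  wlog h : m₂ ≤ m₁ generalizing m₁ m₂
  · rw [tvDist_comm, abs_sub_comm]
    exact this m₂ m₁ (le_of_not_ge h)
  rw [abs_of_nonneg (sub_nonneg.2 h)]
  exact tvDist_gaussianReal_of_le hσ h
end

section
/- Let H be a real inner product space, let β > 0, let g, g' : H → H with g β-co-coercive, let 0 < η ≤ 1/β, and let B ≥ 0 be such that ‖g'(w) − g(w)‖ ≤ B for all w ∈ H. Then for all w₁, w₂ ∈ H, the one-step SGD iterates satisfy ‖(w₁ − η g(w₁)) − (w₂ − η g'(w₂))‖² ≤ ‖w₁ − w₂‖² + 2ηB‖w₁ − w₂‖ + 2η²B². -/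
open MeasureTheory ProbabilityTheory Real
open scoped Classical RealInnerProductSpace BigOperators

/-!
Write `a = w₁ - w₂`, `u = g w₁ - g w₂` and `e = g' w₂ - g w₂`, so that the difference of the two
iterates is `(a - η • u) + η • e`. Co-coercivity gives `‖u‖² ≤ β ⟪a, u⟫`, which makes the clean
step nonexpansive: `‖a - η • u‖² = ‖a‖² - η (2 - η β) ⟪a, u⟫ + η² (‖u‖² - β ⟪a, u⟫) ≤ ‖a‖²`.
The poisoning term has norm at most `η B`, and the triangle inequality, squared, gives the bound.
-/

section Cocoercive

variable {H : Type*} [NormedAddCommGroup H] [InnerProductSpace ℝ H]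

lemma real_inner_nonneg_of_sq_norm_le_mul_inner {a u : H} {β : ℝ} (hβ : 0 ≤ β)
    (h : ‖u‖ ^ 2 ≤ β * ⟪a, u⟫) : 0 ≤ ⟪a, u⟫ := by
  by_contra! hneg
  have hu : u = 0 := by
    rw [← norm_eq_zero, ← sq_eq_zero_iff]
    nlinarith [sq_nonneg ‖u‖]
  simp [hu] at hneg

lemma norm_sub_smul_le_of_sq_norm_le_mul_inner {a u : H} {β η : ℝ} (hβ : 0 ≤ β)
    (h : ‖u‖ ^ 2 ≤ β * ⟪a, u⟫) (hη0 : 0 ≤ η) (hη : η * β ≤ 2) :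
    ‖a - η • u‖ ≤ ‖a‖ := by
  have hinner := real_inner_nonneg_of_sq_norm_le_mul_inner hβ h
  have hexpand : ‖a - η • u‖ ^ 2 = ‖a‖ ^ 2 - 2 * η * ⟪a, u⟫ + η ^ 2 * ‖u‖ ^ 2 := by
    rw [norm_sub_sq_real, real_inner_smul_right, norm_smul, Real.norm_of_nonneg hη0]
    ring
  refine pow_le_pow_iff_left₀ (norm_nonneg _) (norm_nonneg _) two_ne_zero |>.mp ?_
  nlinarith [mul_le_mul_of_nonneg_left h (sq_nonneg η),
    mul_le_mul_of_nonneg_right hη (mul_nonneg hη0 hinner)]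

end Cocoercive

theorem one_step_sgd_deviation_general {H : Type*} [NormedAddCommGroup H]
    [InnerProductSpace ℝ H] (β : ℝ) (hβ : 0 < β) (g g' : H → H)
    (hg : ∀ w₁ w₂ : H, ‖g w₁ - g w₂‖ ^ 2 ≤ β * ⟪w₁ - w₂, g w₁ - g w₂⟫)
    (η : ℝ) (hη0 : 0 < η) (hη : η ≤ 1 / β)
    (B : ℝ) (hB : ∀ w : H, ‖g' w - g w‖ ≤ B) (w₁ w₂ : H) :
    ‖(w₁ - η • g w₁) - (w₂ - η • g' w₂)‖ ^ 2
      ≤ ‖w₁ - w₂‖ ^ 2 + 2 * η * B * ‖w₁ - w₂‖ + 2 * η ^ 2 * B ^ 2 := by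
  have hηβ : η * β ≤ 2 := by
    rw [le_div_iff₀ hβ] at hη
    linarith
  have hclean : ‖(w₁ - w₂) - η • (g w₁ - g w₂)‖ ≤ ‖w₁ - w₂‖ :=
    norm_sub_smul_le_of_sq_norm_le_mul_inner hβ.le (hg w₁ w₂) hη0.le hηβ
  have hpoison : ‖η • (g' w₂ - g w₂)‖ ≤ η * B := by
    rw [norm_smul, Real.norm_of_nonneg hη0.le]
    exact mul_le_mul_of_nonneg_left (hB w₂) hη0.le
  have hsplit : (w₁ - η • g w₁) - (w₂ - η • g' w₂)
      = ((w₁ - w₂) - η • (g w₁ - g w₂)) + η • (g' w₂ - g w₂) := by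
    simp only [smul_sub]
    abel
  have htri : ‖(w₁ - η • g w₁) - (w₂ - η • g' w₂)‖ ≤ ‖w₁ - w₂‖ + η * B :=
    hsplit ▸ (norm_add_le _ _).trans (add_le_add hclean hpoison)
  nlinarith [pow_le_pow_left₀ (norm_nonneg _) htri 2, sq_nonneg (η * B)]

theorem one_step_sgd_deviation {H : Type*} [NormedAddCommGroup H]
    [InnerProductSpace ℝ H] (β : ℝ) (hβ : 0 < β) (g g' : H → H)
    (hg : ∀ w₁ w₂ : H, ‖g w₁ - g w₂‖ ^ 2 ≤ β * ⟪w₁ - w₂, g w₁ - g w₂⟫)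
    (η : ℝ) (hη0 : 0 < η) (hη : η ≤ 1 / β)
    (B : ℝ) (hB0 : 0 ≤ B) (hB : ∀ w : H, ‖g' w - g w‖ ≤ B) (w₁ w₂ : H) :
    ‖(w₁ - η • g w₁) - (w₂ - η • g' w₂)‖ ^ 2
      ≤ ‖w₁ - w₂‖ ^ 2 + 2 * η * B * ‖w₁ - w₂‖ + 2 * η ^ 2 * B ^ 2 :=
  one_step_sgd_deviation_general β hβ g g' hg η hη0 hη B hB w₁ w₂
end

section
/- Let H = ℝ^d with the Euclidean inner product. Fix R ≥ 1, β > 0, and for each i = 1, …, R constants p_i ≥ 0, γ_i ≥ 0, τ_i ∈ ℕ, B_i ≥ 0, and 0 < η_i ≤ 1/β. For each i and each step s < τ_i let g_{i,s}, g'_{i,s} : H → H be maps such that each g_{i,s} is β-co-coercive and ‖g'_{i,s}(w) − g_{i,s}(w)‖ ≤ B_i for all w ∈ H. Fix w₀ ∈ H and u ∈ H. Define clean local iterates w^i_0 = w₀, w^i_{s+1} = w^i_s − η_i g_{i,s}(w^i_s), and poisoned local iterates v^i_0 = w₀, v^i_{s+1} = v^i_s − η_i g'_{i,s}(v^i_s).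 Set w = w₀ + u + Σ_{i=1}^R p_i γ_i (w^i_{τ_i} − w₀) and w' = w₀ + u + Σ_{i=1}^R p_i γ_i (v^i_{τ_i} − w₀). Then for any ρ > 0 and σ > 0: D_KL( N(Clip_ρ(w), σ²I) ‖ N(Clip_ρ(w'), σ²I) ) ≤ 2R · Σ_{i=1}^R (p_i γ_i τ_i η_i B_i)² / σ². -/
/-!
Both Gaussians have covariance `σ²I`, so their log-likelihood ratio is affine and the KL divergence
is `‖Clip_ρ w - Clip_ρ w'‖² / (2σ²)`. Clipping is the metric projection onto a ball, hence
1-Lipschitz. A gradient step `x ↦ x - η g x` with `g` β-co-coercive and `η ≤ 2/β` is nonexpansive,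
so each poisoned local step adds at most `η_i B_i` to the distance between the clean and poisoned
iterates, and `‖w^i_{τ_i} - v^i_{τ_i}‖ ≤ τ_i η_i B_i`. The triangle inequality and Cauchy–Schwarz
over the `R` clients then bound `‖w - w'‖²` by `R Σ (p_i γ_i τ_i η_i B_i)²`.
-/

open MeasureTheory ProbabilityTheory Real
open scoped Classical RealInnerProductSpace BigOperators

open scoped ENNReal NNReal

section KLDiv
variable {α β : Type*} [MeasurableSpace α] [MeasurableSpace β]

lemma klDiv_map_measurableEquiv (e : α ≃ᵐ β) (μ ν : Measure α) [SigmaFinite μ] [SigmaFinite ν] :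
    klDiv (μ.map e) (ν.map e) = klDiv μ ν := by
  have hac : μ.map e ≪ ν.map e ↔ μ ≪ ν := by
    refine ⟨fun h => ?_, fun h => h.map e.measurable⟩
    simpa [Measure.map_map e.symm.measurable e.measurable] using h.map e.symm.measurable
  unfold klDiv
  by_cases h : μ ≪ ν
  · rw [if_pos (hac.2 h), if_pos h, e.measurableEmbedding.integral_map]
    refine congrArg (fun r : ℝ => (r : EReal)) (integral_congr_ae ?_)
    filter_upwards [h.ae_le (e.measurableEmbedding.rnDeriv_map μ ν)] with x hx
    rw [hx]
  · rw [if_neg (mt hac.1 h), if_neg h]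

lemma klDiv_withDensity_ofReal_exp (ν : Measure α) [SigmaFinite ν] {f : α → ℝ}
    (hf : Measurable f) :
    klDiv (ν.withDensity fun x => ENNReal.ofReal (exp (f x))) ν
      = ((∫ x, f x ∂ν.withDensity fun x => ENNReal.ofReal (exp (f x)) : ℝ) : EReal) := by
  have hac := withDensity_absolutelyContinuous ν fun x => ENNReal.ofReal (exp (f x))
  rw [klDiv, if_pos hac]
  refine congrArg (fun r : ℝ => (r : EReal)) (integral_congr_ae ?_)
  filter_upwards [hac.ae_le (Measure.rnDeriv_withDensity ν
    (f := fun x => ENNReal.ofReal (exp (f x))) (by fun_prop))] with x hx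
  rw [hx, ENNReal.toReal_ofReal (exp_pos _).le, log_exp]

end KLDiv

section Pi
variable {ι : Type*} [Fintype ι] {X : ι → Type*} [∀ i, MeasurableSpace (X i)]
  {μ : (i : ι) → Measure (X i)} [∀ i, IsProbabilityMeasure (μ i)]

lemma lintegral_pi_prod_eq_prod {f : (i : ι) → X i → ℝ≥0∞} (hf : ∀ i, Measurable (f i)) :
    ∫⁻ x, ∏ i, f i (x i) ∂Measure.pi μ = ∏ i, ∫⁻ t, f i t ∂μ i := by
  rw [lintegral_prod_eq_prod_lintegral_of_indepFun _ _ (iIndepFun_pi fun i => (hf i).aemeasurable)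
    fun i => (hf i).comp (measurable_pi_apply i)]
  exact Finset.prod_congr rfl fun i _ => (measurePreserving_eval μ i).lintegral_comp (hf i)

lemma MeasureTheory.Measure.pi_withDensity {f : (i : ι) → X i → ℝ≥0∞} (hf : ∀ i, Measurable (f i))
    [∀ i, SigmaFinite ((μ i).withDensity (f i))] :
    Measure.pi (fun i => (μ i).withDensity (f i))
      = (Measure.pi μ).withDensity fun x => ∏ i, f i (x i) := by
  refine Measure.pi_eq fun s hs => ?_
  have hind : (Set.univ.pi s).indicator (fun x => ∏ i, f i (x i))
      = fun x => ∏ i, (s i).indicator (f i) (x i) := by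
    ext x
    by_cases hx : x ∈ Set.univ.pi s
    · simp_all [Set.indicator_of_mem]
    · obtain ⟨i, hi⟩ : ∃ i, x i ∉ s i := by simpa using hx
      rw [Set.indicator_of_notMem hx, Finset.prod_eq_zero (Finset.mem_univ i)
        (Set.indicator_of_notMem hi _)]
  rw [withDensity_apply _ (.univ_pi hs), ← lintegral_indicator (.univ_pi hs), hind,
    lintegral_pi_prod_eq_prod fun i => (hf i).indicator (hs i)]
  exact Finset.prod_congr rfl fun i _ => by
    rw [withDensity_apply _ (hs i), lintegral_indicator (hs i)]

end Pi

section Gaussian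

noncomputable def gaussianLLR (μ μ' : ℝ) (v : ℝ≥0) (x : ℝ) : ℝ :=
  ((μ - μ') * x + (μ' ^ 2 - μ ^ 2) / 2) / v

@[fun_prop]
lemma measurable_gaussianLLR (μ μ' : ℝ) (v : ℝ≥0) : Measurable (gaussianLLR μ μ' v) := by
  unfold gaussianLLR; fun_prop

lemma gaussianPDFReal_eq_mul_exp_gaussianLLR (μ μ' : ℝ) (v : ℝ≥0) (x : ℝ) :
    gaussianPDFReal μ v x = gaussianPDFReal μ' v x * exp (gaussianLLR μ μ' v x) := by
  rw [gaussianPDFReal, gaussianPDFReal, mul_assoc _ (rexp _), ← exp_add, gaussianLLR]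
  congr 2
  ring

lemma gaussianReal_eq_withDensity (μ μ' : ℝ) {v : ℝ≥0} (hv : v ≠ 0) :
    gaussianReal μ v
      = (gaussianReal μ' v).withDensity fun x => ENNReal.ofReal (exp (gaussianLLR μ μ' v x)) := by
  rw [gaussianReal_of_var_ne_zero _ hv, gaussianReal_of_var_ne_zero _ hv,
    ← withDensity_mul _ (measurable_gaussianPDF _ _) (by fun_prop)]
  congr 1
  funext x
  rw [Pi.mul_apply, gaussianPDF, gaussianPDF, ← ENNReal.ofReal_mul (gaussianPDFReal_nonneg _ _ _),
    ← gaussianPDFReal_eq_mul_exp_gaussianLLR]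

lemma integrable_gaussianLLR (μ μ' ν : ℝ) (v w : ℝ≥0) :
    Integrable (gaussianLLR μ μ' v) (gaussianReal ν w) := by
  have hid : Integrable (fun x => x) (gaussianReal ν w) := (memLp_id_gaussianReal 1).integrable le_rfl
  exact ((hid.const_mul _).add (integrable_const _)).div_const _

lemma integral_gaussianLLR (μ μ' : ℝ) (v : ℝ≥0) :
    ∫ x, gaussianLLR μ μ' v x ∂gaussianReal μ v = (μ - μ') ^ 2 / (2 * v) := by
  have hid : Integrable (fun x => x) (gaussianReal μ v) :=
    (memLp_id_gaussianReal 1).integrable le_rfl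
  simp only [gaussianLLR]
  rw [integral_div, integral_add (hid.const_mul _) (integrable_const _), integral_const_mul,
    integral_id_gaussianReal, integral_const]
  simp only [probReal_univ, smul_eq_mul, one_mul]
  ring

lemma klDiv_pi_gaussianReal {ι : Type*} [Fintype ι] (m m' : ι → ℝ) {v : ℝ≥0} (hv : v ≠ 0) :
    klDiv (Measure.pi fun i => gaussianReal (m i) v) (Measure.pi fun i => gaussianReal (m' i) v)
      = ((∑ i, (m i - m' i) ^ 2 / (2 * v) : ℝ) : EReal) := by
  have hpi : (Measure.pi fun i => gaussianReal (m i) v)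
      = (Measure.pi fun i => gaussianReal (m' i) v).withDensity
          fun x => ENNReal.ofReal (exp (∑ i, gaussianLLR (m i) (m' i) v (x i))) := by
    rw [funext fun i => gaussianReal_eq_withDensity (m i) (m' i) hv,
      Measure.pi_withDensity fun i => by fun_prop]
    simp_rw [exp_sum, ENNReal.ofReal_prod_of_nonneg fun i _ => (exp_pos _).le]
  rw [hpi, klDiv_withDensity_ofReal_exp _ (by fun_prop), ← hpi,
    integral_finsetSum _ fun i _ => integrable_comp_eval (integrable_gaussianLLR _ _ _ _ _)]
  congr 1
  refine Finset.sum_congr rfl fun i _ => ?_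
  rw [integral_comp_eval (integrable_gaussianLLR _ _ _ _ _).aestronglyMeasurable,
    integral_gaussianLLR]

lemma klDiv_gaussianPi {d : ℕ} (m m' : EuclideanSpace ℝ (Fin d)) {σ : ℝ} (hσ : σ ≠ 0) :
    klDiv (gaussianPi m σ) (gaussianPi m' σ) = ((‖m - m'‖ ^ 2 / (2 * σ ^ 2) : ℝ) : EReal) := by
  set v : ℝ≥0 := ⟨σ ^ 2, sq_nonneg σ⟩
  have hv : v ≠ 0 := fun h => hσ (pow_eq_zero_iff two_ne_zero |>.mp (congrArg NNReal.toReal h))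
  have hmap : ∀ m : EuclideanSpace ℝ (Fin d), gaussianPi m σ
      = (Measure.pi fun i => gaussianReal (m i) v).map (MeasurableEquiv.toLp 2 (Fin d → ℝ)) :=
    fun _ => rfl
  rw [hmap, hmap, klDiv_map_measurableEquiv, klDiv_pi_gaussianReal _ _ hv,
    EuclideanSpace.norm_sq_eq, Finset.sum_div]
  simp only [PiLp.sub_apply, Real.norm_eq_abs, sq_abs]
  rfl

end Gaussian

section Nonexpansive
variable {H : Type*} [NormedAddCommGroup H] [InnerProductSpace ℝ H]

def Cocoercive (β : ℝ) (g : H → H) : Prop :=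
  ∀ w₁ w₂, ‖g w₁ - g w₂‖ ^ 2 ≤ β * ⟪w₁ - w₂, g w₁ - g w₂⟫

lemma Cocoercive.lipschitzWith_sub_smul {β η : ℝ} {g : H → H} (hg : Cocoercive β g)
    (hβ : 0 < β) (hη₀ : 0 ≤ η) (hη : η ≤ 2 / β) :
    LipschitzWith 1 fun x => x - η • g x := by
  refine LipschitzWith.of_dist_le_mul fun x y => ?_
  rw [NNReal.coe_one, one_mul, dist_eq_norm, dist_eq_norm]
  have hinner : 0 ≤ ⟪x - y, g x - g y⟫ :=
    (mul_nonneg_iff_of_pos_left hβ).1 ((sq_nonneg _).trans (hg x y))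
  have hηβ : η * β ≤ 2 := (le_div_iff₀ hβ).1 hη
  have hsq : ‖(x - y) - η • (g x - g y)‖ ^ 2 ≤ ‖x - y‖ ^ 2 := by
    rw [norm_sub_sq_real, inner_smul_right, norm_smul, mul_pow, Real.norm_eq_abs, sq_abs]
    nlinarith [mul_le_mul_of_nonneg_left (hg x y) (sq_nonneg η),
      mul_le_mul_of_nonneg_right hηβ (mul_nonneg hη₀ hinner)]
  rw [show x - η • g x - (y - η • g y) = (x - y) - η • (g x - g y) by rw [smul_sub]; abel]
  exact (pow_le_pow_iff_left₀ (norm_nonneg _) (norm_nonneg _) two_ne_zero).1 hsq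

lemma norm_smul_sub_smul_le {x y : H} {s t : ℝ} (hs : 0 ≤ s) (ht : 0 ≤ t) (hst : s * t ≤ 1)
    (hnorm : |s * ‖x‖ - t * ‖y‖| ≤ |‖x‖ - ‖y‖|) : ‖s • x - t • y‖ ≤ ‖x - y‖ := by
  have hnorm_sq := sq_le_sq.2 hnorm
  have hinner : ⟪x, y⟫ ≤ ‖x‖ * ‖y‖ := real_inner_le_norm x y
  -- `‖x - y‖² - ‖s • x - t • y‖²`
  --   `= (‖x‖ - ‖y‖)² - (s‖x‖ - t‖y‖)² + 2 (1 - s t) (‖x‖ ‖y‖ - ⟪x, y⟫)`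
  have hsq : ‖s • x - t • y‖ ^ 2 ≤ ‖x - y‖ ^ 2 := by
    rw [norm_sub_sq_real, norm_sub_sq_real, inner_smul_left, inner_smul_right, norm_smul,
      norm_smul, Real.norm_eq_abs, Real.norm_eq_abs, abs_of_nonneg hs, abs_of_nonneg ht]
    simp only [conj_trivial]
    nlinarith [mul_nonneg (sub_nonneg.2 hst) (sub_nonneg.2 hinner)]
  exact (pow_le_pow_iff_left₀ (norm_nonneg _) (norm_nonneg _) two_ne_zero).1 hsq

lemma inv_max_one_div_mul_self {a ρ : ℝ} (hρ : 0 < ρ) :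
    (max 1 (a / ρ))⁻¹ * a = min a ρ := by
  rcases le_total a ρ with h | h
  · rw [max_eq_left ((div_le_one hρ).2 h), min_eq_left h, inv_one, one_mul]
  · rw [max_eq_right ((one_le_div hρ).2 h), min_eq_right h, inv_div, div_mul_cancel₀]
    exact (hρ.trans_le h).ne'

lemma lipschitzWith_one_clip (ρ : ℝ) : LipschitzWith 1 (clip ρ : H → H) := by
  rcases le_or_gt ρ 0 with hρ | hρ
  · have hid : clip ρ = (id : H → H) := funext fun w => by
      rw [clip, max_eq_left ((div_nonpos_of_nonneg_of_nonpos (norm_nonneg w) hρ).trans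
        zero_le_one), inv_one, one_smul, id]
    exact hid ▸ LipschitzWith.id
  refine LipschitzWith.of_dist_le_mul fun x y => ?_
  rw [NNReal.coe_one, one_mul, dist_eq_norm, dist_eq_norm]
  refine norm_smul_sub_smul_le (by positivity) (by positivity)
    (mul_le_one₀ (inv_le_one_of_one_le₀ (le_max_left _ _)) (by positivity)
      (inv_le_one_of_one_le₀ (le_max_left _ _))) ?_
  rw [inv_max_one_div_mul_self hρ, inv_max_one_div_mul_self hρ]
  simpa using abs_min_sub_min_le_max ‖x‖ ρ ‖y‖ ρ

end Nonexpansive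

lemma dist_perturbed_iterates_le {X : Type*} [PseudoMetricSpace X] {τ : ℕ} {ε : ℝ}
    {T T' : ℕ → X → X} (hT : ∀ s < τ, LipschitzWith 1 (T s))
    (hT' : ∀ s < τ, ∀ y, dist (T s y) (T' s y) ≤ ε) {W V : ℕ → X} (h0 : W 0 = V 0)
    (hW : ∀ s < τ, W (s + 1) = T s (W s)) (hV : ∀ s < τ, V (s + 1) = T' s (V s)) :
    dist (W τ) (V τ) ≤ τ * ε := by
  suffices ∀ s ≤ τ, dist (W s) (V s) ≤ s * ε from this τ le_rfl
  intro s hs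
  induction s with
  | zero => simp [h0]
  | succ s ih =>
    have hsτ : s < τ := hs
    calc dist (W (s + 1)) (V (s + 1))
        ≤ dist (T s (W s)) (T s (V s)) + dist (T s (V s)) (T' s (V s)) := by
          rw [hW s hsτ, hV s hsτ]; exact dist_triangle _ _ _
      _ ≤ dist (W s) (V s) + ε := by
          gcongr
          · simpa using (hT s hsτ).dist_le_mul (W s) (V s)
          · exact hT' s hsτ _
      _ ≤ (s + 1 : ℕ) * ε := by push_cast; linarith [ih hsτ.le]

section GradientSteps
variable {H : Type*} [NormedAddCommGroup H] [InnerProductSpace ℝ H]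

lemma norm_sub_le_of_perturbed_gradient_steps {β η B : ℝ} {τ : ℕ} {g g' : ℕ → H → H}
    (hβ : 0 < β) (hη₀ : 0 ≤ η) (hη : η ≤ 2 / β) (hg : ∀ s < τ, Cocoercive β (g s))
    (hdev : ∀ s < τ, ∀ w, ‖g' s w - g s w‖ ≤ B) {W V : ℕ → H} (h0 : W 0 = V 0)
    (hW : ∀ s < τ, W (s + 1) = W s - η • g s (W s))
    (hV : ∀ s < τ, V (s + 1) = V s - η • g' s (V s)) :
    ‖W τ - V τ‖ ≤ τ * (η * B) := by
  rw [← dist_eq_norm]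
  refine dist_perturbed_iterates_le (T' := fun s x => x - η • g' s x)
    (fun s hs => (hg s hs).lipschitzWith_sub_smul hβ hη₀ hη) (fun s hs y => ?_) h0 hW hV
  rw [dist_eq_norm, sub_sub_sub_cancel_left, ← smul_sub, norm_smul, Real.norm_of_nonneg hη₀]
  exact mul_le_mul_of_nonneg_left (hdev s hs y) hη₀

lemma sq_norm_sum_smul_le {ι : Type*} (s : Finset ι) (c b : ι → ℝ) (x : ι → H)
    (hx : ∀ i ∈ s, ‖x i‖ ≤ b i) :
    ‖∑ i ∈ s, c i • x i‖ ^ 2 ≤ s.card * ∑ i ∈ s, (c i * b i) ^ 2 := by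
  have hnorm : ‖∑ i ∈ s, c i • x i‖ ≤ ∑ i ∈ s, |c i| * b i :=
    (norm_sum_le _ _).trans <| Finset.sum_le_sum fun i hi => by
      rw [norm_smul, Real.norm_eq_abs]; exact mul_le_mul_of_nonneg_left (hx i hi) (abs_nonneg _)
  calc ‖∑ i ∈ s, c i • x i‖ ^ 2 ≤ (∑ i ∈ s, |c i| * b i) ^ 2 := by gcongr
    _ ≤ s.card * ∑ i ∈ s, (|c i| * b i) ^ 2 := sq_sum_le_card_mul_sum_sq
    _ = s.card * ∑ i ∈ s, (c i * b i) ^ 2 := by simp_rw [mul_pow, sq_abs]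

end GradientSteps

theorem kl_bound_attack_round_general (d R : ℕ)
    (β : ℝ) (hβ : 0 < β)
    (p γ η B : Fin R → ℝ) (τ : Fin R → ℕ)
    (hη0 : ∀ i, 0 < η i) (hη : ∀ i, η i ≤ 1 / β)
    (g g' : Fin R → ℕ → EuclideanSpace ℝ (Fin d) → EuclideanSpace ℝ (Fin d))
    (hcoco : ∀ i, ∀ s < τ i, ∀ w₁ w₂ : EuclideanSpace ℝ (Fin d),
      ‖g i s w₁ - g i s w₂‖ ^ 2 ≤ β * ⟪w₁ - w₂, g i s w₁ - g i s w₂⟫)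
    (hdev : ∀ i, ∀ s < τ i, ∀ w : EuclideanSpace ℝ (Fin d), ‖g' i s w - g i s w‖ ≤ B i)
    (w₀ u : EuclideanSpace ℝ (Fin d))
    (W V : Fin R → ℕ → EuclideanSpace ℝ (Fin d))
    (hW0 : ∀ i, W i 0 = w₀) (hV0 : ∀ i, V i 0 = w₀)
    (hWs : ∀ i, ∀ s < τ i, W i (s + 1) = W i s - η i • g i s (W i s))
    (hVs : ∀ i, ∀ s < τ i, V i (s + 1) = V i s - η i • g' i s (V i s))
    (w w' : EuclideanSpace ℝ (Fin d))
    (hw : w = w₀ + u + ∑ i : Fin R, (p i * γ i) • (W i (τ i) - w₀))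
    (hw' : w' = w₀ + u + ∑ i : Fin R, (p i * γ i) • (V i (τ i) - w₀))
    (ρ σ : ℝ) (hσ : 0 < σ) :
    klDiv (gaussianPi (clip ρ w) σ) (gaussianPi (clip ρ w') σ)
      ≤ ((2 * (R : ℝ) * (∑ i : Fin R, (p i * γ i * (τ i : ℝ) * η i * B i) ^ 2) / σ ^ 2 : ℝ)
          : EReal) := by
  have hlocal : ∀ i, ‖W i (τ i) - V i (τ i)‖ ≤ τ i * (η i * B i) := fun i =>
    norm_sub_le_of_perturbed_gradient_steps hβ (hη0 i).le
      ((hη i).trans (div_le_div_of_nonneg_right one_le_two hβ.le)) (hcoco i) (hdev i)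
      ((hW0 i).trans (hV0 i).symm) (hWs i) (hVs i)
  have hdiff : w - w' = ∑ i, (p i * γ i) • (W i (τ i) - V i (τ i)) := by
    rw [hw, hw', add_sub_add_left_eq_sub, ← Finset.sum_sub_distrib]
    simp_rw [← smul_sub, sub_sub_sub_cancel_right]
  have hclip : ‖clip ρ w - clip ρ w'‖ ^ 2 ≤ R * ∑ i, (p i * γ i * τ i * η i * B i) ^ 2 := by
    have hw_w' := (lipschitzWith_one_clip ρ).norm_sub_le w w'
    rw [NNReal.coe_one, one_mul] at hw_w'
    refine (pow_le_pow_left₀ (norm_nonneg _) hw_w' 2).trans ?_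
    simpa [hdiff, mul_assoc] using
      sq_norm_sum_smul_le Finset.univ (fun i => p i * γ i) _ _ fun i _ => hlocal i
  have hS : 0 ≤ ∑ i, (p i * γ i * τ i * η i * B i) ^ 2 := by positivity
  rw [klDiv_gaussianPi _ _ hσ.ne', EReal.coe_le_coe_iff,
    div_le_div_iff₀ (by positivity) (by positivity)]
  nlinarith [mul_le_mul_of_nonneg_right hclip (sq_nonneg σ)]

theorem kl_bound_attack_round (d R : ℕ) (hd : 1 ≤ d) (hR : 1 ≤ R)
    (β : ℝ) (hβ : 0 < β)
    (p γ η B : Fin R → ℝ) (τ : Fin R → ℕ)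
    (hp : ∀ i, 0 ≤ p i) (hγ : ∀ i, 0 ≤ γ i) (hB0 : ∀ i, 0 ≤ B i)
    (hη0 : ∀ i, 0 < η i) (hη : ∀ i, η i ≤ 1 / β)
    (g g' : Fin R → ℕ → EuclideanSpace ℝ (Fin d) → EuclideanSpace ℝ (Fin d))
    (hcoco : ∀ i, ∀ s < τ i, ∀ w₁ w₂ : EuclideanSpace ℝ (Fin d),
      ‖g i s w₁ - g i s w₂‖ ^ 2 ≤ β * ⟪w₁ - w₂, g i s w₁ - g i s w₂⟫)
    (hdev : ∀ i, ∀ s < τ i, ∀ w : EuclideanSpace ℝ (Fin d), ‖g' i s w - g i s w‖ ≤ B i)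
    (w₀ u : EuclideanSpace ℝ (Fin d))
    (W V : Fin R → ℕ → EuclideanSpace ℝ (Fin d))
    (hW0 : ∀ i, W i 0 = w₀) (hV0 : ∀ i, V i 0 = w₀)
    (hWs : ∀ i, ∀ s < τ i, W i (s + 1) = W i s - η i • g i s (W i s))
    (hVs : ∀ i, ∀ s < τ i, V i (s + 1) = V i s - η i • g' i s (V i s))
    (w w' : EuclideanSpace ℝ (Fin d))
    (hw : w = w₀ + u + ∑ i : Fin R, (p i * γ i) • (W i (τ i) - w₀))
    (hw' : w' = w₀ + u + ∑ i : Fin R, (p i * γ i) • (V i (τ i) - w₀))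
    (ρ σ : ℝ) (hρ : 0 < ρ) (hσ : 0 < σ) :
    klDiv (gaussianPi (clip ρ w) σ) (gaussianPi (clip ρ w') σ)
      ≤ ((2 * (R : ℝ) * (∑ i : Fin R, (p i * γ i * (τ i : ℝ) * η i * B i) ^ 2) / σ ^ 2 : ℝ)
          : EReal) :=
  kl_bound_attack_round_general d R β hβ p γ η B τ hη0 hη g g' hcoco hdev w₀ u W V hW0 hV0 hWs hVs w
    w' hw hw' ρ σ hσ
end

section
/- Let d, C ≥ 1, let W be a real d × C matrix with Frobenius norm ‖W‖_F ≤ ρ for some ρ ≥ 0, and fix a class y ∈ {1, …, C} with one-hot row vector Y ∈ ℝ^C (Y_i = 1 if i = y, else 0). For a row vector x ∈ ℝ^d define the softmax probabilities P(x)_i = exp((xW)_i) / Σ_{j=1}^C exp((xW)_j) and the cross-entropy gradient G(x) = xᵀ (P(x) − Y) ∈ ℝ^{d×C}. Then for all x, x' ∈ ℝ^d with ‖x‖₂ ≤ 1 and ‖x'‖₂ ≤ 1: ‖G(x) − G(x')‖_F ≤ √(2 + 2ρ + ρ²) · ‖x − x'‖₂. -/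
open MeasureTheory ProbabilityTheory Real
open scoped Classical RealInnerProductSpace BigOperators

/-- Softmax probabilities of the linear model `x ↦ xW`. -/
noncomputable def softmaxP {d C : ℕ} (W : Matrix (Fin d) (Fin C) ℝ) (x : Fin d → ℝ)
    (j : Fin C) : ℝ :=
  Real.exp (Matrix.vecMul x W j) / ∑ k : Fin C, Real.exp (Matrix.vecMul x W k)

/-- Gradient of the cross-entropy loss of multi-class logistic regression with respect to
the weight matrix, at sample `(x, y)`: `G(x) = xᵀ (P(x) − Y)`. -/
noncomputable def ceGrad {d C : ℕ} (W : Matrix (Fin d) (Fin C) ℝ) (y : Fin C)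
    (x : Fin d → ℝ) : Matrix (Fin d) (Fin C) ℝ :=
  fun i j => x i * (softmaxP W x j - (if j = y then 1 else 0))

/-! Writing `P = P(x)`, `P' = P(x')`, the gradient difference splits as
`G(x) - G(x') = x ⊗ (P - P') + (x - x') ⊗ (P' - Y)`, and the Frobenius norm of an outer product
is the product of the norms. Two points of the probability simplex are at distance at most `√2`,
which bounds the second term. For the first, softmax is `½`-Lipschitz: its Jacobian at `z` is the
covariance form `diag p - p pᵀ` of the weights `p = softmax z`, and a variance under weights `p`
is at most half the squared norm, so the mean value theorem along the segment from `x'W` to `xW`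
gives `‖P - P'‖ ≤ ½ ‖(x - x') W‖ ≤ ½ ρ ‖x - x'‖`. Finally `√2 + ρ/2 ≤ √(2 + 2ρ + ρ²)`. -/

open Finset

section SumsOfSquares

variable {ι κ : Type*} [Fintype ι] [Fintype κ]

lemma sqrt_sum_sum_add_sq_le (f g : ι → κ → ℝ) :
    √(∑ i, ∑ j, (f i j + g i j) ^ 2)
      ≤ √(∑ i, ∑ j, f i j ^ 2) + √(∑ i, ∑ j, g i j ^ 2) := by
  simpa [PiLp.norm_eq_of_L2, Fintype.sum_prod_type] using
    norm_add_le (WithLp.toLp 2 fun q : ι × κ => f q.1 q.2) (WithLp.toLp 2 fun q => g q.1 q.2)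

lemma sqrt_sum_sum_mul_sq (a : ι → ℝ) (b : κ → ℝ) :
    √(∑ i, ∑ j, (a i * b j) ^ 2) = √(∑ i, a i ^ 2) * √(∑ j, b j ^ 2) := by
  simp_rw [mul_pow, ← mul_sum, ← sum_mul]
  exact sqrt_mul (by positivity) _

lemma sqrt_sum_vecMul_sq_le (c : ι → ℝ) (W : Matrix ι κ ℝ) :
    √(∑ j, Matrix.vecMul c W j ^ 2) ≤ √(∑ i, ∑ j, W i j ^ 2) * √(∑ i, c i ^ 2) := by
  rw [← sqrt_mul (by positivity), sum_comm (f := fun i j => W i j ^ 2), sum_mul]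
  exact sqrt_le_sqrt <| sum_le_sum fun j _ => by
    simpa [Matrix.vecMul, dotProduct, mul_comm] using sum_mul_sq_le_sq_mul_sq univ c (W · j)

lemma sum_sub_sq_le_two_of_mem_stdSimplex {p q : ι → ℝ} (hp : p ∈ stdSimplex ℝ ι)
    (hq : q ∈ stdSimplex ℝ ι) : ∑ j, (p j - q j) ^ 2 ≤ 2 := by
  calc ∑ j, (p j - q j) ^ 2 ≤ ∑ j, (p j + q j) := sum_le_sum fun j _ => by
        obtain ⟨hp0, hp1⟩ := mem_Icc_of_mem_stdSimplex hp j
        obtain ⟨hq0, hq1⟩ := mem_Icc_of_mem_stdSimplex hq j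
        nlinarith
    _ = 2 := by rw [sum_add_distrib, hp.2, hq.2]; norm_num

end SumsOfSquares

section Weighted

variable {ι : Type*} [Fintype ι] {p : ι → ℝ}

lemma abs_sum_weight_mul_le (hp : ∀ i, 0 ≤ p i) (f g : ι → ℝ) :
    |∑ i, p i * f i * g i| ≤ √(∑ i, p i * f i ^ 2) * √(∑ i, p i * g i ^ 2) := by
  rw [← sqrt_mul (sum_nonneg fun i _ => mul_nonneg (hp i) (sq_nonneg _)), ← sqrt_sq_eq_abs]
  exact sqrt_le_sqrt <| sum_sq_le_sum_mul_sum_of_sq_le_mul _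
    (fun i _ => mul_nonneg (hp i) (sq_nonneg _)) (fun i _ => mul_nonneg (hp i) (sq_nonneg _))
    fun i _ => le_of_eq (by ring)

lemma sum_weight_mul_sub_sq_le (hp : p ∈ stdSimplex ℝ ι) (u : ι → ℝ) :
    ∑ i, p i * (u i - ∑ k, p k * u k) ^ 2 ≤ (1 / 2) * ∑ i, u i ^ 2 := by
  set m := ∑ k, p k * u k with hm
  have hvar : ∑ i, p i * (u i - m) ^ 2 = ∑ i, p i * u i ^ 2 - m ^ 2 := by
    have h : ∀ i, p i * (u i - m) ^ 2 = p i * u i ^ 2 - 2 * m * (p i * u i) + m ^ 2 * p i :=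
      fun i => by ring
    simp only [h, sum_add_distrib, sum_sub_distrib, ← mul_sum, hp.2, ← hm]
    ring
  -- Dropping the off-diagonal terms of this double sum gives `2 ∑ pᵢ² uᵢ² ≤ ∑ pᵢ uᵢ² + m²`,
  -- so the variance is at most `2 ∑ pᵢ (1 - pᵢ) uᵢ² ≤ ½ ∑ uᵢ²`.
  have hpairs :
      ∑ i, ∑ k, p i * p k * (u i + u k) ^ 2 = 2 * ∑ i, p i * u i ^ 2 + 2 * m ^ 2 := by
    have h : ∀ i k, p i * p k * (u i + u k) ^ 2
        = p i * u i ^ 2 * p k + 2 * (p i * u i) * (p k * u k) + p i * (p k * u k ^ 2) :=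
      fun i k => by ring
    simp only [h, sum_add_distrib, ← mul_sum, ← sum_mul, hp.2, ← hm]
    ring
  have hdiag : ∑ i, 4 * (p i ^ 2 * u i ^ 2) ≤ ∑ i, ∑ k, p i * p k * (u i + u k) ^ 2 :=
    sum_le_sum fun i _ => (le_of_eq (by ring)).trans <|
      single_le_sum (f := fun k => p i * p k * (u i + u k) ^ 2)
        (fun k _ => mul_nonneg (mul_nonneg (hp.1 i) (hp.1 k)) (sq_nonneg _)) (mem_univ i)
  have hquarter :
      ∑ i, (2 * (p i * u i ^ 2) - 2 * (p i ^ 2 * u i ^ 2)) ≤ ∑ i, (1 / 2) * u i ^ 2 :=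
    sum_le_sum fun i _ => by nlinarith [mul_nonneg (sq_nonneg (p i - 1 / 2)) (sq_nonneg (u i))]
  rw [← mul_sum] at hdiag
  simp only [sum_sub_distrib, ← mul_sum] at hquarter
  linarith

lemma abs_sum_mul_weight_mul_sub_le (hp : p ∈ stdSimplex ℝ ι) (u v : ι → ℝ) :
    |∑ j, v j * (p j * (u j - ∑ k, p k * u k))|
      ≤ 1 / 2 * (√(∑ j, v j ^ 2) * √(∑ j, u j ^ 2)) := by
  set mu := ∑ k, p k * u k with hmu
  set mv := ∑ k, p k * v k
  have hcentered : ∑ j, p j * (u j - mu) = 0 := by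
    simp only [mul_sub, sum_sub_distrib, ← sum_mul, hp.2, ← hmu, one_mul, sub_self]
  have hcov : ∑ j, v j * (p j * (u j - mu)) = ∑ j, p j * (v j - mv) * (u j - mu) := by
    have h : ∀ j, p j * (v j - mv) * (u j - mu)
        = v j * (p j * (u j - mu)) - mv * (p j * (u j - mu)) := fun j => by ring
    simp only [h, sum_sub_distrib, ← mul_sum, hcentered, mul_zero, sub_zero]
  have hhalf : √(1 / 2 : ℝ) * √(1 / 2) = 1 / 2 := mul_self_sqrt (by norm_num)
  rw [hcov]
  calc |∑ j, p j * (v j - mv) * (u j - mu)|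
      ≤ √(∑ j, p j * (v j - mv) ^ 2) * √(∑ j, p j * (u j - mu) ^ 2) :=
        abs_sum_weight_mul_le hp.1 _ _
    _ ≤ √(1 / 2 * ∑ j, v j ^ 2) * √(1 / 2 * ∑ j, u j ^ 2) :=
        mul_le_mul (sqrt_le_sqrt (sum_weight_mul_sub_sq_le hp v))
          (sqrt_le_sqrt (sum_weight_mul_sub_sq_le hp u)) (sqrt_nonneg _) (sqrt_nonneg _)
    _ = 1 / 2 * (√(∑ j, v j ^ 2) * √(∑ j, u j ^ 2)) := by
        rw [sqrt_mul (by norm_num), sqrt_mul (by norm_num)]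
        linear_combination (√(∑ j, v j ^ 2) * √(∑ j, u j ^ 2)) * hhalf

end Weighted

section Softmax

variable {ι : Type*} [Fintype ι]

noncomputable def softmax (z : ι → ℝ) (j : ι) : ℝ :=
  exp (z j) / ∑ k, exp (z k)

variable [Nonempty ι]

lemma sum_exp_pos (z : ι → ℝ) : 0 < ∑ k, exp (z k) :=
  sum_pos (fun k _ => exp_pos (z k)) univ_nonempty

lemma softmax_mem_stdSimplex (z : ι → ℝ) : softmax z ∈ stdSimplex ℝ ι :=
  ⟨fun j => (div_pos (exp_pos _) (sum_exp_pos z)).le, by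
    simp only [softmax, ← sum_div, div_self (sum_exp_pos z).ne']⟩

lemma hasDerivAt_softmax {z : ℝ → ι → ℝ} {z' : ι → ℝ} {t : ℝ}
    (hz : ∀ k, HasDerivAt (z · k) (z' k) t) (j : ι) :
    HasDerivAt (fun s => softmax (z s) j)
      (softmax (z t) j * (z' j - ∑ k, softmax (z t) k * z' k)) t := by
  have hS := HasDerivAt.fun_sum fun k (_ : k ∈ univ) => (hz k).exp
  refine ((hz j).exp.div hS (sum_exp_pos (z t)).ne').congr_deriv ?_
  simp only [softmax, div_mul_eq_mul_div, ← sum_div]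
  field_simp

theorem sqrt_sum_sq_softmax_sub_le (z w : ι → ℝ) :
    √(∑ j, (softmax z j - softmax w j) ^ 2) ≤ 1 / 2 * √(∑ j, (z j - w j) ^ 2) := by
  set v := fun j => softmax z j - softmax w j
  set u := fun j => z j - w j
  let line : ℝ → ι → ℝ := fun t k => w k + t * u k
  have hline : ∀ t k, HasDerivAt (line · k) (u k) t := fun t k =>
    (((hasDerivAt_id' t).mul_const (u k)).const_add (w k)).congr_deriv (one_mul _)
  let φ : ℝ → ℝ := fun t => ∑ j, v j * softmax (line t) j
  have hφ : ∀ t, HasDerivAt φ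
      (∑ j, v j * (softmax (line t) j * (u j - ∑ k, softmax (line t) k * u k))) t :=
    fun t => HasDerivAt.fun_sum fun j _ => (hasDerivAt_softmax (hline t) j).const_mul (v j)
  obtain ⟨ξ, -, hξ⟩ := exists_hasDerivAt_eq_slope φ _ zero_lt_one
    (fun t _ => (hφ t).continuousAt.continuousWithinAt) (fun t _ => hφ t)
  have hφ01 : φ 1 - φ 0 = ∑ j, v j ^ 2 := by
    simp [φ, line, u, v, ← sum_sub_distrib, sq, mul_sub]
  have hsq : ∑ j, v j ^ 2 ≤ 1 / 2 * (√(∑ j, v j ^ 2) * √(∑ j, u j ^ 2)) := by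
    rw [hφ01, sub_zero, div_one] at hξ
    exact hξ.symm.le.trans <|
      (le_abs_self _).trans (abs_sum_mul_weight_mul_sub_le (softmax_mem_stdSimplex _) u v)
  have hV := sq_sqrt (show 0 ≤ ∑ j, v j ^ 2 by positivity)
  nlinarith [sqrt_nonneg (∑ j, v j ^ 2), sqrt_nonneg (∑ j, u j ^ 2)]

end Softmax

theorem logistic_regression_gradient_lipschitz_general (d C : ℕ)
    (W : Matrix (Fin d) (Fin C) ℝ) (ρ : ℝ)
    (hW : Real.sqrt (∑ i : Fin d, ∑ j : Fin C, (W i j) ^ 2) ≤ ρ)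
    (y : Fin C) (x x' : Fin d → ℝ)
    (hx : Real.sqrt (∑ i : Fin d, (x i) ^ 2) ≤ 1) :
    Real.sqrt (∑ i : Fin d, ∑ j : Fin C, (ceGrad W y x i j - ceGrad W y x' i j) ^ 2)
      ≤ Real.sqrt (2 + 2 * ρ + ρ ^ 2) * Real.sqrt (∑ i : Fin d, (x i - x' i) ^ 2) := by
  have : Nonempty (Fin C) := ⟨y⟩
  set P := softmax (Matrix.vecMul x W)
  set P' := softmax (Matrix.vecMul x' W)
  set Y : Fin C → ℝ := fun j => if j = y then 1 else 0
  have hY : Y = Pi.single y 1 := funext fun j => (Pi.single_apply y 1 j).symm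
  set δ := √(∑ i, (x i - x' i) ^ 2)
  have hsplit : ∀ i j, ceGrad W y x i j - ceGrad W y x' i j
      = x i * (P j - P' j) + (x i - x' i) * (P' j - Y j) := fun i j => by
    show x i * (P j - Y j) - x' i * (P' j - Y j) = _
    ring
  have hP : √(∑ j, (P j - P' j) ^ 2) ≤ 1 / 2 * (ρ * δ) := by
    refine (sqrt_sum_sq_softmax_sub_le _ _).trans (mul_le_mul_of_nonneg_left ?_ (by norm_num))
    calc √(∑ j, (Matrix.vecMul x W j - Matrix.vecMul x' W j) ^ 2)
        = √(∑ j, Matrix.vecMul (x - x') W j ^ 2) := by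
          simp only [Matrix.sub_vecMul, Pi.sub_apply]
      _ ≤ √(∑ i, ∑ j, W i j ^ 2) * δ := sqrt_sum_vecMul_sq_le _ W
      _ ≤ ρ * δ := mul_le_mul_of_nonneg_right hW (sqrt_nonneg _)
  have hPY : √(∑ j, (P' j - Y j) ^ 2) ≤ √2 :=
    sqrt_le_sqrt <| sum_sub_sq_le_two_of_mem_stdSimplex (softmax_mem_stdSimplex _)
      (hY ▸ single_mem_stdSimplex ℝ y)
  have hρ : 0 ≤ ρ := (sqrt_nonneg _).trans hW
  have hconst : √2 + ρ / 2 ≤ √(2 + 2 * ρ + ρ ^ 2) := by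
    rw [le_sqrt (by positivity) (by positivity)]
    nlinarith [sq_sqrt (zero_le_two (α := ℝ)), sqrt_nonneg 2]
  calc √(∑ i, ∑ j, (ceGrad W y x i j - ceGrad W y x' i j) ^ 2)
      ≤ √(∑ i, ∑ j, (x i * (P j - P' j)) ^ 2)
        + √(∑ i, ∑ j, ((x i - x' i) * (P' j - Y j)) ^ 2) := by
        simp only [hsplit]
        exact sqrt_sum_sum_add_sq_le _ _
    _ = √(∑ i, x i ^ 2) * √(∑ j, (P j - P' j) ^ 2) + δ * √(∑ j, (P' j - Y j) ^ 2) := by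
        rw [sqrt_sum_sum_mul_sq, sqrt_sum_sum_mul_sq]
    _ ≤ 1 * (1 / 2 * (ρ * δ)) + δ * √2 := by gcongr
    _ = (√2 + ρ / 2) * δ := by ring
    _ ≤ √(2 + 2 * ρ + ρ ^ 2) * δ := by gcongr

theorem logistic_regression_gradient_lipschitz (d C : ℕ) (hd : 1 ≤ d) (hC : 1 ≤ C)
    (W : Matrix (Fin d) (Fin C) ℝ) (ρ : ℝ) (hρ : 0 ≤ ρ)
    (hW : Real.sqrt (∑ i : Fin d, ∑ j : Fin C, (W i j) ^ 2) ≤ ρ)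
    (y : Fin C) (x x' : Fin d → ℝ)
    (hx : Real.sqrt (∑ i : Fin d, (x i) ^ 2) ≤ 1)
    (hx' : Real.sqrt (∑ i : Fin d, (x' i) ^ 2) ≤ 1) :
    Real.sqrt (∑ i : Fin d, ∑ j : Fin C, (ceGrad W y x i j - ceGrad W y x' i j) ^ 2)
      ≤ Real.sqrt (2 + 2 * ρ + ρ ^ 2) * Real.sqrt (∑ i : Fin d, (x i - x' i) ^ 2) :=
  logistic_regression_gradient_lipschitz_general d C W ρ hW y x x' hx
end
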